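/- Let (p, l) be an affine realization of an incidence geometry (P, L, I) possessing four points i₁, i₂, i₃, i₄ ∈ P such that any three of the homogenizations p̂(i₁), p̂(i₂), p̂(i₃), p̂(i₄) are linearly independent. If the |I| linear functionals on (ℝ²)^P × (ℝ²)^L given by (ṗ, l̇) ↦ p(i) ⬝ l̇(j) + l(j) ⬝ ṗ(i) for (i, j) ∈ I are linearly independent (i.e., the rows of the projective rigidity matrix are linearly independent), then |I| ≤ 2|P| + 2|L| − 8. -/

import Mathlib

open Matrix

/-- Homogenization: `(v₁, v₂) ↦ (v₁, v₂, 1)`. -/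
def hat (v : Fin 2 → ℝ) : Fin 3 → ℝ := Fin.snoc v 1

/-- An affine realization of the incidence geometry `(P, L, I)`:
`l j ⬝ p i + 1 = 0` for every incidence `(i, j)`. -/
def IsAffRealization {P L : Type*} (I : Set (P × L))
    (p : P → Fin 2 → ℝ) (l : L → Fin 2 → ℝ) : Prop :=
  ∀ ij ∈ I, l ij.2 ⬝ᵥ p ij.1 + 1 = 0

/-- The row of the projective rigidity matrix corresponding to an incidence `(i, j)`,
viewed as the linear functional `(ṗ, l̇) ↦ p i ⬝ l̇ j + l j ⬝ ṗ i`
on `(ℝ²)^P × (ℝ²)^L`. -/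
def rigidityRow {P L : Type*} [Fintype P] [Fintype L]
    (p : P → Fin 2 → ℝ) (l : L → Fin 2 → ℝ) (ij : P × L) :
    ((P → Fin 2 → ℝ) × (L → Fin 2 → ℝ)) → ℝ :=
  fun m => p ij.1 ⬝ᵥ m.2 ij.2 + l ij.2 ⬝ᵥ m.1 ij.1

/-!
Differentiating the projective flow `t ↦ exp (t A)` of a `3 × 3` matrix `A` (with lines moving
by the inverse transpose) gives a linear map from matrices to infinitesimal motions `(ṗ, l̇)`.
Incidences are preserved along the flow, so every row of the rigidity matrix annihilates its
range. A matrix in the kernel has every `hat (p i)` as an eigenvector; since four points in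
general position form a projective frame, it is a scalar. Hence the range has dimension
`9 - 1 = 8`, and independent rows lie in its annihilator, of dimension `2|P| + 2|L| - 8`.
-/

open Module

section Frame

variable {K V : Type*} [Field K] [AddCommGroup V] [Module K V]

variable (K) in
def IsProjectiveFrame (x : Fin 4 → V) : Prop :=
  ∀ k₁ k₂ k₃ : Fin 4, k₁ ≠ k₂ → k₁ ≠ k₃ → k₂ ≠ k₃ → LinearIndependent K ![x k₁, x k₂, x k₃]

theorem coeff_ne_zero_of_linearIndependent_cons {x₀ x₁ x₂ y : V} {a₀ a₁ a₂ : K}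
    (hy : y = a₀ • x₀ + a₁ • x₁ + a₂ • x₂) (h : LinearIndependent K ![y, x₁, x₂]) :
    a₀ ≠ 0 := by
  rintro rfl
  refine (linearIndependent_finCons.mp h).2 ?_
  rw [hy, zero_smul, zero_add]
  exact add_mem (Submodule.smul_mem _ _ (Submodule.subset_span ⟨0, rfl⟩))
    (Submodule.smul_mem _ _ (Submodule.subset_span ⟨1, rfl⟩))

theorem Module.End.eigenvalue_eq_of_apply_sum_eq_smul {ι : Type*} [Fintype ι]
    {f : Module.End K V} {b : ι → V} (hb : LinearIndependent K b) {c : ι → K}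
    (hc : ∀ i, f (b i) = c i • b i) {a : ι → K} {d : K}
    (hd : f (∑ i, a i • b i) = d • ∑ i, a i • b i) {i : ι} (hi : a i ≠ 0) : c i = d := by
  have h := Fintype.linearIndependent_iff.mp hb (fun i => a i * (c i - d)) <| by
    simp only [map_sum, map_smul, hc, Finset.smul_sum] at hd
    simp only [mul_sub, sub_smul, Finset.sum_sub_distrib, mul_smul, hd, smul_comm d, sub_self]
  exact sub_eq_zero.mp ((mul_eq_zero.mp (h i)).resolve_left hi)

theorem Module.End.eq_smul_one_of_isProjectiveFrame (hV : finrank K V = 3) {x : Fin 4 → V}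
    (hx : IsProjectiveFrame K x) (f : Module.End K V) (hf : ∀ k, ∃ c : K, f (x k) = c • x k) :
    ∃ t : K, f = t • 1 := by
  choose c hc using hf
  have hb := hx 0 1 2 (by decide) (by decide) (by decide)
  have hspan := hb.span_eq_top_of_card_eq_finrank (by simp [hV])
  obtain ⟨a, ha⟩ :=
    (Submodule.mem_span_range_iff_exists_fun K).mp (hspan ▸ Submodule.mem_top (x := x 3))
  have hx₃ : x 3 = a 0 • x 0 + a 1 • x 1 + a 2 • x 2 := by
    rw [← ha, Fin.sum_univ_three]; rfl
  -- No coordinate of `x 3` in the basis `x 0, x 1, x 2` vanishes, so all eigenvalues agree.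
  have ha_ne : ∀ i, a i ≠ 0 := by
    intro i
    fin_cases i
    · exact coeff_ne_zero_of_linearIndependent_cons hx₃
        (hx 3 1 2 (by decide) (by decide) (by decide))
    · exact coeff_ne_zero_of_linearIndependent_cons
        (show x 3 = a 1 • x 1 + a 0 • x 0 + a 2 • x 2 by rw [hx₃]; module)
        (hx 3 0 2 (by decide) (by decide) (by decide))
    · exact coeff_ne_zero_of_linearIndependent_cons
        (show x 3 = a 2 • x 2 + a 0 • x 0 + a 1 • x 1 by rw [hx₃]; module)
        (hx 3 0 1 (by decide) (by decide) (by decide))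
  have hcb : ∀ i, f (![x 0, x 1, x 2] i) = ![c 0, c 1, c 2] i • ![x 0, x 1, x 2] i := by
    intro i; fin_cases i <;> exact hc _
  refine ⟨c 3, LinearMap.ext_on_range hspan fun i => ?_⟩
  rw [LinearMap.smul_apply, Module.End.one_apply, hcb,
    eigenvalue_eq_of_apply_sum_eq_smul hb hcb (by rw [ha]; exact hc 3) (ha_ne i)]

end Frame

-- The derivative of the dehomogenization `(x, z) ↦ x / z` at `hat v` in the direction `w`.
def dehomDeriv (v : Fin 2 → ℝ) : (Fin 3 → ℝ) →ₗ[ℝ] (Fin 2 → ℝ) where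
  toFun w := (fun k => w k.castSucc) - w 2 • v
  map_add' w w' := by ext k; simp only [Pi.add_apply, Pi.sub_apply, Pi.smul_apply]; module
  map_smul' c w := by ext k; simp only [Pi.smul_apply, Pi.sub_apply, RingHom.id_apply]; module

theorem dehomDeriv_apply (v : Fin 2 → ℝ) (w : Fin 3 → ℝ) :
    dehomDeriv v w = (fun k => w k.castSucc) - w 2 • v :=
  rfl

@[simp]
theorem hat_last (v : Fin 2 → ℝ) : hat v 2 = 1 := Fin.snoc_last _ _

@[simp]
theorem hat_castSucc (v : Fin 2 → ℝ) (k : Fin 2) : hat v k.castSucc = v k :=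
  Fin.snoc_castSucc _ _ _

theorem dehomDeriv_hat (v : Fin 2 → ℝ) : dehomDeriv v (hat v) = 0 := by
  ext k; simp [dehomDeriv]

theorem eq_smul_hat_of_dehomDeriv_eq_zero {v : Fin 2 → ℝ} {w : Fin 3 → ℝ}
    (h : dehomDeriv v w = 0) : w = w 2 • hat v := by
  ext k
  refine Fin.lastCases ?_ (fun k => ?_) k
  · simp
  · have := congrFun h k
    simp only [dehomDeriv, LinearMap.coe_mk, AddHom.coe_mk, Pi.zero_apply] at this
    simp [sub_eq_zero.mp this]

theorem dotProduct_dehomDeriv {u v : Fin 2 → ℝ} (h : u ⬝ᵥ v + 1 = 0) (w : Fin 3 → ℝ) :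
    u ⬝ᵥ dehomDeriv v w = hat u ⬝ᵥ w := by
  rw [dehomDeriv_apply, dotProduct_sub, dotProduct_smul, eq_neg_of_add_eq_zero_left h,
    dotProduct.eq_1 (hat u), Fin.sum_univ_castSucc]
  simp [dotProduct]

section Motion

variable {P L : Type*}

-- Infinitesimal motion of `(p, l)` along the projective flow `t ↦ exp (t A)`;
-- lines move by the inverse transpose `exp (-t Aᵀ)`.
def projectiveMotion (p : P → Fin 2 → ℝ) (l : L → Fin 2 → ℝ) :
    Matrix (Fin 3) (Fin 3) ℝ →ₗ[ℝ] (P → Fin 2 → ℝ) × (L → Fin 2 → ℝ) where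
  toFun A := (fun i => dehomDeriv (p i) (A *ᵥ hat (p i)),
    fun j => dehomDeriv (l j) (-(Aᵀ *ᵥ hat (l j))))
  map_add' A B := by
    ext <;> simp [Matrix.add_mulVec, Matrix.transpose_add, add_comm]
  map_smul' c A := by
    ext <;> simp [Matrix.smul_mulVec, Matrix.transpose_smul]

theorem projectiveMotion_one (p : P → Fin 2 → ℝ) (l : L → Fin 2 → ℝ) :
    projectiveMotion p l 1 = 0 := by
  ext <;> simp [projectiveMotion, dehomDeriv_hat]

theorem mulVec_hat_eq_smul_of_projectiveMotion_eq_zero {p : P → Fin 2 → ℝ}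
    {l : L → Fin 2 → ℝ} {A : Matrix (Fin 3) (Fin 3) ℝ} (hA : projectiveMotion p l A = 0)
    (i : P) : ∃ c : ℝ, A *ᵥ hat (p i) = c • hat (p i) :=
  ⟨_, eq_smul_hat_of_dehomDeriv_eq_zero (congrFun (congrArg Prod.fst hA) i)⟩

theorem ker_projectiveMotion {p : P → Fin 2 → ℝ} (l : L → Fin 2 → ℝ) (i₁ i₂ i₃ i₄ : P)
    (hframe : IsProjectiveFrame ℝ ![hat (p i₁), hat (p i₂), hat (p i₃), hat (p i₄)]) :
    LinearMap.ker (projectiveMotion p l) = Submodule.span ℝ {1} := by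
  refine le_antisymm (fun A hA => ?_) ?_
  · obtain ⟨t, ht⟩ := Module.End.eq_smul_one_of_isProjectiveFrame (by simp) hframe
      (Matrix.toLin' A) fun k => by
        fin_cases k <;> exact mulVec_hat_eq_smul_of_projectiveMotion_eq_zero hA _
    refine Submodule.mem_span_singleton.mpr ⟨t, Matrix.toLin'.injective ?_⟩
    rw [ht, map_smul, Matrix.toLin'_one]
    rfl
  · exact (Submodule.span_singleton_le_iff_mem _ _).mpr (projectiveMotion_one p l)

theorem finrank_range_projectiveMotion {p : P → Fin 2 → ℝ}
    (l : L → Fin 2 → ℝ) (i₁ i₂ i₃ i₄ : P)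
    (hframe : IsProjectiveFrame ℝ ![hat (p i₁), hat (p i₂), hat (p i₃), hat (p i₄)]) :
    finrank ℝ (LinearMap.range (projectiveMotion p l)) = 8 := by
  have h := LinearMap.finrank_range_add_finrank_ker (projectiveMotion p l)
  rw [ker_projectiveMotion l i₁ i₂ i₃ i₄ hframe, finrank_span_singleton one_ne_zero,
    Module.finrank_matrix] at h
  simp only [Fintype.card_fin, finrank_self] at h
  omega

end Motion

theorem LinearIndependent.fintype_card_add_finrank_le {K V ι : Type*} [Field K]
    [AddCommGroup V] [Module K V] [FiniteDimensional K V] [Fintype ι]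
    {φ : ι → Module.Dual K V} (hφ : LinearIndependent K φ) {W : Submodule K V}
    (hW : ∀ i, φ i ∈ W.dualAnnihilator) : Fintype.card ι + finrank K W ≤ finrank K V := by
  have hspan : Submodule.span K (Set.range φ) ≤ W.dualAnnihilator :=
    Submodule.span_le.mpr (Set.range_subset_iff.mpr hW)
  have := finrank_span_eq_card hφ ▸ Submodule.finrank_mono hspan
  have := Subspace.finrank_add_finrank_dualAnnihilator_eq W
  omega

section Rigidity

variable {P L : Type*} [Fintype P] [Fintype L]

def rigidityRowₗ (p : P → Fin 2 → ℝ) (l : L → Fin 2 → ℝ) (ij : P × L) :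
    Module.Dual ℝ ((P → Fin 2 → ℝ) × (L → Fin 2 → ℝ)) where
  toFun := rigidityRow p l ij
  map_add' m n := by simp only [rigidityRow, Prod.fst_add, Prod.snd_add, Pi.add_apply,
    dotProduct_add]; ring
  map_smul' c m := by simp only [rigidityRow, Prod.smul_fst, Prod.smul_snd, Pi.smul_apply,
    dotProduct_smul, smul_eq_mul, RingHom.id_apply]; ring

theorem rigidityRowₗ_projectiveMotion {p : P → Fin 2 → ℝ} {l : L → Fin 2 → ℝ} {ij : P × L}
    (h : l ij.2 ⬝ᵥ p ij.1 + 1 = 0) (A : Matrix (Fin 3) (Fin 3) ℝ) :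
    rigidityRowₗ p l ij (projectiveMotion p l A) = 0 := by
  change p ij.1 ⬝ᵥ dehomDeriv (l ij.2) _ + l ij.2 ⬝ᵥ dehomDeriv (p ij.1) _ = 0
  rw [dotProduct_dehomDeriv (by rwa [dotProduct_comm]), dotProduct_dehomDeriv h,
    dotProduct_neg, Matrix.mulVec_transpose, dotProduct_comm, ← Matrix.dotProduct_mulVec,
    neg_add_cancel]

end Rigidity

/-- Theorem: let `(p, l)` be an affine realization of `(P, L, I)` with four points
whose homogenizations are three-by-three linearly independent. If the rows of the
projective rigidity matrix (the `|I|` functionals `rigidityRow`) are linearly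
independent, then `|I| ≤ 2|P| + 2|L| − 8`. -/
theorem indep_rows_count
    {P L : Type*} [Fintype P] [Fintype L] (I : Set (P × L))
    (p : P → Fin 2 → ℝ) (l : L → Fin 2 → ℝ)
    (hreal : IsAffRealization I p l)
    (i₁ i₂ i₃ i₄ : P)
    (hfour : ∀ k₁ k₂ k₃ : Fin 4, k₁ ≠ k₂ → k₁ ≠ k₃ → k₂ ≠ k₃ →
      LinearIndependent ℝ
        ![![hat (p i₁), hat (p i₂), hat (p i₃), hat (p i₄)] k₁,
          ![hat (p i₁), hat (p i₂), hat (p i₃), hat (p i₄)] k₂,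
          ![hat (p i₁), hat (p i₂), hat (p i₃), hat (p i₄)] k₃])
    (hindep : LinearIndependent ℝ (fun ij : I => rigidityRow p l (ij : P × L))) :
    (I.ncard : ℤ) ≤ 2 * (Fintype.card P : ℤ) + 2 * (Fintype.card L : ℤ) - 8 := by
  classical
  have hrows : LinearIndependent ℝ (fun ij : I => rigidityRowₗ p l ij) :=
    hindep.of_comp (LinearMap.ltoFun ℝ _ ℝ ℝ)
  have hcount := hrows.fintype_card_add_finrank_le (W := LinearMap.range (projectiveMotion p l))
    fun ij => (Submodule.mem_dualAnnihilator _).mpr <| by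
      rintro _ ⟨A, rfl⟩
      exact rigidityRowₗ_projectiveMotion (hreal ij ij.2) A
  rw [finrank_range_projectiveMotion l i₁ i₂ i₃ i₄ hfour] at hcount
  simp only [Module.finrank_prod, Module.finrank_pi_fintype, Fintype.card_fin, Module.finrank_self,
    Finset.sum_const, Finset.card_univ, smul_eq_mul] at hcount
  rw [Set.ncard_eq_toFinset_card', Set.toFinset_card]
  omega
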